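/- Let X, Y be inner product modules over a C*-algebra A and T: X → Y a ℂ-linear map satisfying |Tx| = γ|x| for all x ∈ X, for some γ > 0. Then T is automatically A-linear: T(xa) = (Tx)a for all x ∈ X, a ∈ A. -/

import Mathlib

open scoped RightActions

/-- The December 2024 Mathlib definition of `CStarModule` (right `A`-module via `Aᵐᵒᵖ`),
reproduced because Mathlib's `CStarModule` is now a left-module notion. -/
class CStarModuleRight (A E : Type*) [NonUnitalSemiring A] [StarRing A] [Module ℂ A]
    [AddCommGroup E] [Module ℂ E] [PartialOrder A] [SMul Aᵐᵒᵖ E] [Norm A] [Norm E]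
    extends Inner A E where
  inner_add_right {x} {y} {z} : inner x (y + z) = inner x y + inner x z
  inner_self_nonneg {x} : 0 ≤ inner x x
  inner_self {x} : inner x x = 0 ↔ x = 0
  inner_op_smul_right {a : A} {x y : E} : inner x (y <• a) = inner x y * a
  inner_smul_right_complex {z : ℂ} {x} {y} : inner x (z • y) = z • inner x y
  star_inner x y : star (inner x y) = inner y x
  norm_eq_sqrt_norm_inner_self x : ‖x‖ = √‖inner x x‖

namespace CStarModuleRight

variable {A E : Type*} [CStarAlgebra A] [PartialOrder A] [StarOrderedRing A]
    [NormedAddCommGroup E] [NormedSpace ℂ E] [Module Aᵐᵒᵖ E] [CStarModuleRight A E]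

theorem inner_add_left {x y z : E} : inner A (x + y) z = inner A x z + inner A y z := by
  rw [← star_inner, inner_add_right, star_add, star_inner, star_inner]

theorem inner_smul_left_complex {z : ℂ} {x y : E} : inner A (z • x) y = star z • inner A x y := by
  rw [← star_inner, inner_smul_right_complex, star_smul, star_inner]

theorem inner_op_smul_left {a : A} {x y : E} : inner A (x <• a) y = star a * inner A x y := by
  rw [← star_inner, inner_op_smul_right, star_mul, star_inner]

theorem inner_sub_right {x y z : E} : inner A x (y - z) = inner A x y - inner A x z :=
  map_sub (AddMonoidHom.mk' (fun w : E => inner A x w) (fun _ _ => inner_add_right)) y z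

theorem inner_sub_left {x y z : E} : inner A (x - y) z = inner A x z - inner A y z :=
  map_sub (AddMonoidHom.mk' (fun w : E => inner A w z) (fun _ _ => inner_add_left)) x y

end CStarModuleRight

/-- A `ℂ`-linear map between inner product `A`-modules with `|Tx| = γ|x|` satisfies
`⟨Tx, Ty⟩ = γ²⟨x, y⟩`; in particular it is automatically `A`-linear: `T(xa) = (Tx)a`. -/
theorem stmt_16 {A E F : Type*} [CStarAlgebra A] [PartialOrder A] [StarOrderedRing A]
    [NormedAddCommGroup E] [NormedSpace ℂ E] [Module Aᵐᵒᵖ E] [CStarModuleRight A E]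
    [NormedAddCommGroup F] [NormedSpace ℂ F] [Module Aᵐᵒᵖ F] [CStarModuleRight A F]
    (T : E →ₗ[ℂ] F) (γ : ℝ) (hγ : 0 < γ)
    (h : ∀ x : E, CFC.sqrt (inner A (T x) (T x) : A) = (γ : ℂ) • CFC.sqrt (inner A x x : A)) :
    ∀ (x : E) (a : A), T (x <• a) = (T x) <• a := by
  -- Step 1: `⟪Tx, Tx⟫ = γ² • ⟪x, x⟫`
  have key : ∀ x : E, (inner A (T x) (T x) : A) = ((γ : ℂ) ^ 2) • inner A x x := by
    intro x
    have h1 : (inner A (T x) (T x) : A) = (CFC.sqrt (inner A (T x) (T x) : A)) ^ 2 :=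
      (CFC.sq_sqrt _ CStarModuleRight.inner_self_nonneg).symm
    rw [h1, h x, smul_pow, CFC.sq_sqrt _ CStarModuleRight.inner_self_nonneg]
  -- Step 2: polarization: `⟪Tx, Ty⟫ = γ² • ⟪x, y⟫`
  have key2 : ∀ x y : E, (inner A (T x) (T y) : A) = ((γ : ℂ) ^ 2) • inner A x y := by
    intro x y
    set c : ℂ := (γ : ℂ) ^ 2 with hc
    set u : A := inner A (T x) (T y) - c • inner A x y with hu
    set v : A := inner A (T y) (T x) - c • inner A y x with hv
    have h1 := key (x + y)
    have h2 := key (x + Complex.I • y)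
    simp only [map_add, map_smul, CStarModuleRight.inner_add_right, CStarModuleRight.inner_add_left,
      CStarModuleRight.inner_smul_right_complex, CStarModuleRight.inner_smul_left_complex,
      key x, key y, smul_add, Complex.star_def, Complex.conj_I] at h1 h2
    have huv : u + v = 0 := by
      rw [hu, hv]
      linear_combination (norm := module) h1
    have huv2 : Complex.I • u - Complex.I • v = 0 := by
      rw [hu, hv]
      linear_combination (norm := module) h2
    have huv3 : u = v := by
      have h3 : Complex.I • (u - v) = 0 := by rw [smul_sub]; exact huv2
      rcases smul_eq_zero.mp h3 with h4 | h4
      · exact absurd h4 Complex.I_ne_zero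
      · exact sub_eq_zero.mp h4
    have h2u : (2 : ℂ) • u = 0 := by
      rw [two_smul]
      nth_rewrite 2 [huv3]
      exact huv
    have hu0 : u = 0 := by
      rcases smul_eq_zero.mp h2u with h4 | h4
      · norm_num at h4
      · exact h4
    rw [hu] at hu0
    exact sub_eq_zero.mp hu0
  -- Step 3: conclude A-linearity
  intro x a
  rw [← sub_eq_zero, ← CStarModuleRight.inner_self (A := A)]
  simp only [CStarModuleRight.inner_sub_right, CStarModuleRight.inner_sub_left,
    CStarModuleRight.inner_op_smul_right, CStarModuleRight.inner_op_smul_left,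
    key2, key]
  simp only [mul_smul_comm, smul_mul_assoc, mul_assoc]
  abel_nf
  simp
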